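/- arXiv:2010.06509 — 4 statements merged into one kernel-verified Lean document; each statement's English description precedes it below -/
import Mathlib

section
/- Let d ≥ 1 be an integer, s ∈ (0,1), and u ∈ L¹(ℝ^d). Then there exists a constant C = C(d,s) such that for every x ∈ (0,1)^d and every real S ≥ 2√d, the family (k ↦ ∫_{(0,1)^d} |u(y)|/‖x − y − S·k‖^{d+2s} dy) indexed by k ∈ ℤ^d \ {0} is summable and Σ_{k∈ℤ^d, k≠0} ∫_{(0,1)^d} |u(y)|/‖x − y − S·k‖^{d+2s} dy ≤ C · ‖u‖_{L¹} · S^{−(d+2s)}. -/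
/-!
For `k ≠ 0` and `y` in the cube, `‖x - y‖ ≤ √d ≤ S / 2` and `‖k‖ ≥ 1`, so
`‖x - y - S k‖ ≥ S ‖k‖ - S / 2 ≥ S ‖k‖ / 2`. Each image therefore contributes at most
`(S / 2)^(-(d+2s)) ‖k‖^(-(d+2s)) ‖u‖_{L¹}`, and `∑_{k ≠ 0} ‖k‖^(-(d+2s))` converges because
`ℤ^d` is a lattice of rank `d < d + 2s`.
-/

open MeasureTheory Filter

/-- An integer vector `k ∈ ℤ^d` viewed as a point of Euclidean space `ℝ^d`. -/
noncomputable def intVec (d : ℕ) (k : Fin d → ℤ) : EuclideanSpace ℝ (Fin d) :=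
  WithLp.toLp 2 (fun i => (k i : ℝ))

open Submodule in
lemma summable_norm_intVec_rpow (d : ℕ) {r : ℝ} (hr : r < -d) :
    Summable fun k : Fin d → ℤ => ‖intVec d k‖ ^ r := by
  let b := (EuclideanSpace.basisFun (Fin d) ℝ).toBasis
  let L := span ℤ (Set.range b)
  have hrank : Module.finrank ℤ L = d := by
    simp [L, Module.finrank_eq_card_basis (b.restrictScalars ℤ)]
  have hmem : ∀ k, intVec d k ∈ L := fun k => by
    have : intVec d k = ∑ i, k i • b i := by
      ext j; simp [intVec, b, Pi.single_apply]
    rw [this]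
    exact sum_mem fun i _ => zsmul_mem (subset_span (Set.mem_range_self i)) _
  let f : (Fin d → ℤ) → L := fun k => ⟨intVec d k, hmem k⟩
  have hinj : Function.Injective f := by
    intro k l h
    funext i
    simpa [f, intVec] using congrArg (fun v : L => (v : EuclideanSpace ℝ (Fin d)) i) h
  have hL : Summable fun z : L => ‖z‖ ^ r :=
    ZLattice.summable_norm_rpow L r (by rw [hrank]; exact hr)
  exact (hL.comp_injective hinj :)

lemma one_le_norm_intVec {d : ℕ} {k : Fin d → ℤ} (hk : k ≠ 0) : 1 ≤ ‖intVec d k‖ := by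
  obtain ⟨i, hi⟩ := Function.ne_iff.mp hk
  calc (1 : ℝ) ≤ |(k i : ℝ)| := by exact_mod_cast Int.one_le_abs hi
    _ = ‖intVec d k i‖ := by simp [intVec]
    _ ≤ ‖intVec d k‖ := PiLp.norm_apply_le _ i

lemma EuclideanSpace.norm_le_sqrt_card {ι : Type*} [Fintype ι] {v : EuclideanSpace ℝ ι}
    (hv : ∀ i, |v i| ≤ 1) : ‖v‖ ≤ √(Fintype.card ι) := by
  rw [EuclideanSpace.norm_eq]
  gcongr
  calc ∑ i, ‖v i‖ ^ 2 ≤ ∑ _i : ι, (1 : ℝ) := by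
        gcongr with i
        rw [Real.norm_eq_abs]
        exact pow_le_one₀ (abs_nonneg _) (hv i)
    _ = Fintype.card ι := by simp

lemma norm_sub_le_sqrt_of_mem_unitCube {d : ℕ} {x y : EuclideanSpace ℝ (Fin d)}
    (hx : ∀ i, x i ∈ Set.Ioo (0 : ℝ) 1) (hy : ∀ i, y i ∈ Set.Ioo (0 : ℝ) 1) :
    ‖x - y‖ ≤ √d := by
  simpa using EuclideanSpace.norm_le_sqrt_card (v := x - y) fun i => by
    obtain ⟨hx0, hx1⟩ := hx i
    obtain ⟨hy0, hy1⟩ := hy i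
    simp only [WithLp.ofLp_sub, Pi.sub_apply]
    exact abs_le.mpr ⟨by linarith, by linarith⟩

lemma half_mul_norm_le_norm_sub_smul {E : Type*} [SeminormedAddCommGroup E] [NormedSpace ℝ E]
    {v w : E} {S : ℝ} (hv : 2 * ‖v‖ ≤ S) (hw : 1 ≤ ‖w‖) : S / 2 * ‖w‖ ≤ ‖v - S • w‖ := by
  have hS : 0 ≤ S := (mul_nonneg zero_le_two (norm_nonneg v)).trans hv
  have := norm_sub_norm_le (S • w) v
  rw [norm_smul, Real.norm_eq_abs, abs_of_nonneg hS, norm_sub_rev] at this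
  nlinarith

lemma setIntegral_abs_div_le {α : Type*} [MeasurableSpace α] {μ : Measure α} {s : Set α}
    (hs : MeasurableSet s) {f g : α → ℝ} (hf : Integrable f μ) {b : ℝ} (hb : 0 < b)
    (hbg : ∀ y ∈ s, b ≤ g y) : ∫ y in s, |f y| / g y ∂μ ≤ b⁻¹ * ∫ y, |f y| ∂μ := by
  have hnonneg : 0 ≤ᵐ[μ.restrict s] fun y => |f y| / g y :=
    ae_restrict_of_forall_mem hs fun y hy => div_nonneg (abs_nonneg _) (hb.trans_le (hbg y hy)).le
  have hle : (fun y => |f y| / g y) ≤ᵐ[μ.restrict s] fun y => b⁻¹ * |f y| :=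
    ae_restrict_of_forall_mem hs fun y hy => by
      dsimp only
      rw [div_eq_inv_mul]
      gcongr
      exact hbg y hy
  calc ∫ y in s, |f y| / g y ∂μ ≤ ∫ y in s, b⁻¹ * |f y| ∂μ :=
        integral_mono_of_nonneg hnonneg (hf.abs.const_mul _).integrableOn hle
    _ = b⁻¹ * ∫ y in s, |f y| ∂μ := integral_const_mul _ _
    _ ≤ b⁻¹ * ∫ y, |f y| ∂μ := mul_le_mul_of_nonneg_left
        (setIntegral_le_integral hf.abs (.of_forall fun y => abs_nonneg _)) (inv_nonneg.mpr hb.le)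

lemma measurableSet_unitCube (d : ℕ) :
    MeasurableSet {y : EuclideanSpace ℝ (Fin d) | ∀ i, y i ∈ Set.Ioo (0 : ℝ) 1} := by
  simp only [Set.ofPred_forall]
  exact .iInter fun i => measurableSet_Ioo.preimage (by fun_prop)

lemma setIntegral_unitCube_div_norm_sub_smul_intVec_le {d : ℕ} {p : ℝ} (hp : 0 ≤ p)
    {u : EuclideanSpace ℝ (Fin d) → ℝ} (hu : Integrable u) {x : EuclideanSpace ℝ (Fin d)}
    (hx : ∀ i, x i ∈ Set.Ioo (0 : ℝ) 1) {S : ℝ} (hS0 : 0 < S) (hS : 2 * √d ≤ S)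
    {k : Fin d → ℤ} (hk : k ≠ 0) :
    ∫ y in {y : EuclideanSpace ℝ (Fin d) | ∀ i, y i ∈ Set.Ioo (0 : ℝ) 1},
        |u y| / ‖x - y - S • intVec d k‖ ^ p
      ≤ (S / 2) ^ (-p) * (∫ y, |u y|) * ‖intVec d k‖ ^ (-p) := by
  have hK := one_le_norm_intVec hk
  have hb : 0 < (S / 2 * ‖intVec d k‖) ^ p := by positivity
  calc _ ≤ ((S / 2 * ‖intVec d k‖) ^ p)⁻¹ * ∫ y, |u y| :=
        setIntegral_abs_div_le (measurableSet_unitCube d) hu hb fun y hy =>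
          Real.rpow_le_rpow (by positivity) (half_mul_norm_le_norm_sub_smul
            (by linarith [norm_sub_le_sqrt_of_mem_unitCube hx hy]) hK) hp
    _ = (S / 2) ^ (-p) * (∫ y, |u y|) * ‖intVec d k‖ ^ (-p) := by
        rw [← Real.rpow_neg (by positivity), Real.mul_rpow (by positivity) (by positivity)]
        ring

/-- For `u ∈ L¹(ℝ^d)` there is a constant `C = C(d,s)` such that for every `x ∈ (0,1)^d`
and every `S ≥ 2√d`, the family `k ↦ ∫_{(0,1)^d} |u(y)|/‖x − y − S·k‖^{d+2s} dy`
indexed by `k ∈ ℤ^d \ {0}` is summable with sum at most `C·‖u‖_{L¹}·S^{−(d+2s)}`. -/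
theorem periodic_images_total_bound (d : ℕ) (hd : 1 ≤ d) (s : ℝ) (hs : s ∈ Set.Ioo (0 : ℝ) 1)
    (u : EuclideanSpace ℝ (Fin d) → ℝ) (hu : Integrable u) :
    ∃ C : ℝ, ∀ x : EuclideanSpace ℝ (Fin d), (∀ i, x i ∈ Set.Ioo (0 : ℝ) 1) →
      ∀ S : ℝ, 2 * Real.sqrt d ≤ S →
        Summable (fun k : {k : Fin d → ℤ // k ≠ 0} =>
          ∫ y in {y : EuclideanSpace ℝ (Fin d) | ∀ i, y i ∈ Set.Ioo (0 : ℝ) 1},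
            |u y| / ‖x - y - S • intVec d (k : Fin d → ℤ)‖ ^ ((d : ℝ) + 2 * s)) ∧
        (∑' k : {k : Fin d → ℤ // k ≠ 0},
            ∫ y in {y : EuclideanSpace ℝ (Fin d) | ∀ i, y i ∈ Set.Ioo (0 : ℝ) 1},
              |u y| / ‖x - y - S • intVec d (k : Fin d → ℤ)‖ ^ ((d : ℝ) + 2 * s))
          ≤ C * (∫ y, |u y|) * S ^ (-((d : ℝ) + 2 * s)) := by
  set p : ℝ := (d : ℝ) + 2 * s
  have hp : (d : ℝ) < p := by linarith [hs.1]
  have hA : Summable fun k : {k : Fin d → ℤ // k ≠ 0} => ‖intVec d k‖ ^ (-p) :=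
    (summable_norm_intVec_rpow d (neg_lt_neg hp)).comp_injective Subtype.val_injective
  refine ⟨2 ^ p * ∑' k : {k : Fin d → ℤ // k ≠ 0}, ‖intVec d k‖ ^ (-p), fun x hx S hS => ?_⟩
  have hS0 : 0 < S := (mul_pos two_pos (Real.sqrt_pos.mpr (Nat.cast_pos.mpr hd))).trans_le hS
  have hterm (k : {k : Fin d → ℤ // k ≠ 0}) :=
    setIntegral_unitCube_div_norm_sub_smul_intVec_le ((Nat.cast_nonneg d).trans hp.le) hu hx
      hS0 hS k.2
  have hmajorant := hA.mul_left ((S / 2) ^ (-p) * ∫ y, |u y|)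
  have hsum := hmajorant.of_nonneg_of_le (fun k => integral_nonneg fun y => by positivity) hterm
  refine ⟨hsum, ?_⟩
  calc _ ≤ ∑' k : {k : Fin d → ℤ // k ≠ 0}, (S / 2) ^ (-p) * (∫ y, |u y|) * ‖intVec d k‖ ^ (-p) :=
        hsum.tsum_le_tsum hterm hmajorant
    _ = _ := by
      rw [tsum_mul_left, Real.div_rpow hS0.le zero_le_two, Real.rpow_neg zero_le_two]
      field_simp
end

section
/- Let d ≥ 1 and N ≥ 1 be integers and s ∈ (0,1). Define Φ(j) = N^{2s}·(2π)^{−d}·∫_{[−π,π]^d} ‖ω‖^{2s}·e^{i⟨ω, j⟩} dω for j ∈ ℤ^d, and Y(x) = Σ_{m=−N}^{N−1} e^{imx} for x ∈ ℝ. Then for every k ∈ {−N, …, N−1}^d, Σ_{j ∈ {−N,…,N−1}^d} Φ(j) · e^{−iπ⟨k, j⟩/N} = π^{2s}·(2N)^{−d} · ∫_{[−N, N]^d} ‖ω‖^{2s} · Π_{l=1}^d Y((π/N)·(ω_l − k_l)) dω. -/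
open MeasureTheory Filter Complex

/-- The convolution kernel of the sinc-fractional Laplacian of order `s` on the grid of
mesh `1/N`: `Φ(j) = N^{2s}(2π)^{−d} ∫_{[−π,π]^d} ‖ω‖^{2s} e^{i⟨ω,j⟩} dω`. -/
noncomputable def sincKernel (d N : ℕ) (s : ℝ) (j : Fin d → ℤ) : ℂ :=
  (((N : ℝ) ^ (2 * s) : ℝ) : ℂ) * (((2 * Real.pi) ^ (-(d : ℝ)) : ℝ) : ℂ) *
    ∫ ω in {ω : EuclideanSpace ℝ (Fin d) | ∀ l, ω l ∈ Set.Icc (-Real.pi) Real.pi},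
      ((‖ω‖ ^ (2 * s) : ℝ) : ℂ) *
        Complex.exp (Complex.I * ((inner ℝ ω (intVec d j) : ℝ) : ℂ))

/-- The Dirichlet-type geometric sum `Y(x) = Σ_{m=−N}^{N−1} e^{imx}`. -/
noncomputable def dirichletY (N : ℕ) (x : ℝ) : ℂ :=
  ∑ m ∈ Finset.Icc (-(N : ℤ)) ((N : ℤ) - 1), Complex.exp (Complex.I * (m : ℂ) * (x : ℂ))

/-!
Each `Φ(j)` is a Fourier coefficient of the weight `‖ω‖^{2s}` on the cube `[-π, π]^d`. The sum
over `j` is finite, so it moves inside the integral, where the modulated exponentials factor into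
the product of the geometric sums `Y(ω_l - π k_l / N)`. The substitution `ω = (π/N) u` maps
`[-N, N]^d` onto `[-π, π]^d`; its Jacobian `(π/N)^d` and the homogeneity factor `(π/N)^{2s}` of
the weight turn `N^{2s} (2π)^{-d}` into `π^{2s} (2N)^{-d}`.
-/

open Finset Pointwise

theorem inner_intVec {d : ℕ} (y : EuclideanSpace ℝ (Fin d)) (j : Fin d → ℤ) :
    inner ℝ y (intVec d j) = ∑ l, y l * j l := by
  simp [PiLp.inner_apply, intVec, mul_comm]

theorem sum_exp_inner_intVec_eq_prod_dirichletY {d : ℕ} (N : ℕ) (y : EuclideanSpace ℝ (Fin d)) :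
    ∑ j ∈ Fintype.piFinset (fun _ : Fin d => Icc (-(N : ℤ)) ((N : ℤ) - 1)),
        exp (I * ((inner ℝ y (intVec d j) : ℝ) : ℂ)) = ∏ l, dirichletY N (y l) := by
  simp only [dirichletY, prod_univ_sum, inner_intVec, ofReal_sum, mul_sum, ← exp_sum]
  refine sum_congr rfl fun j _ => congrArg exp (sum_congr rfl fun l _ => ?_)
  push_cast
  ring

theorem sum_setIntegral_mul_exp_inner_mul_exp_neg_inner {d N : ℕ} {w : EuclideanSpace ℝ (Fin d) → ℂ}
    {S : Set (EuclideanSpace ℝ (Fin d))} (hw : IntegrableOn w S) (x : EuclideanSpace ℝ (Fin d)) :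
    ∑ j ∈ Fintype.piFinset (fun _ : Fin d => Icc (-(N : ℤ)) ((N : ℤ) - 1)),
        (∫ ω in S, w ω * exp (I * ((inner ℝ ω (intVec d j) : ℝ) : ℂ))) *
          exp (-I * ((inner ℝ x (intVec d j) : ℝ) : ℂ))
      = ∫ ω in S, w ω * ∏ l, dirichletY N (ω l - x l) := by
  have hphase : ∀ ω j, exp (I * ((inner ℝ ω (intVec d j) : ℝ) : ℂ)) *
      exp (-I * ((inner ℝ x (intVec d j) : ℝ) : ℂ))
        = exp (I * ((inner ℝ (ω - x) (intVec d j) : ℝ) : ℂ)) := by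
    intro ω j
    rw [← exp_add, inner_sub_left, ofReal_sub]
    ring_nf
  have hint : ∀ j : Fin d → ℤ, IntegrableOn
      (fun ω => w ω * exp (I * ((inner ℝ (ω - x) (intVec d j) : ℝ) : ℂ))) S := by
    intro j
    refine hw.mul_bdd (c := 1) (Continuous.aestronglyMeasurable (by fun_prop)) ?_
    exact Eventually.of_forall fun ω => by rw [mul_comm, norm_exp_ofReal_mul_I]
  simp_rw [← integral_mul_const, mul_assoc, hphase]
  rw [← integral_finsetSum _ fun j _ => hint j]
  simp_rw [← mul_sum, sum_exp_inner_intVec_eq_prod_dirichletY, PiLp.sub_apply]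

def cube (d : ℕ) (a : ℝ) : Set (EuclideanSpace ℝ (Fin d)) := {ω | ∀ l, ω l ∈ Set.Icc (-a) a}

theorem isCompact_cube (d : ℕ) (a : ℝ) : IsCompact (cube d a) := by
  have : cube d a = WithLp.toLp 2 '' Set.univ.pi fun _ => Set.Icc (-a) a := by
    ext ω
    exact ⟨fun hω => ⟨ω.ofLp, Set.mem_univ_pi.2 hω, rfl⟩,
      by rintro ⟨v, hv, rfl⟩; exact Set.mem_univ_pi.1 hv⟩
  rw [this]
  exact (isCompact_univ_pi fun _ => isCompact_Icc).image (PiLp.continuous_toLp ..)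

theorem smul_cube {d : ℕ} {c : ℝ} (hc : 0 < c) (a : ℝ) : c • cube d a = cube d (c * a) := by
  ext x
  simp only [cube, Set.mem_smul_set_iff_inv_smul_mem₀ hc.ne', Set.mem_ofPred_eq, Set.mem_Icc,
    PiLp.smul_apply, smul_eq_mul, le_inv_mul_iff₀ hc, inv_mul_le_iff₀ hc, mul_neg]

theorem setIntegral_cube_mul {d : ℕ} {F : Type*} [NormedAddCommGroup F] [NormedSpace ℝ F]
    (f : EuclideanSpace ℝ (Fin d) → F) {c : ℝ} (hc : 0 < c) (a : ℝ) :
    ∫ ω in cube d (c * a), f ω = c ^ d • ∫ u in cube d a, f (c • u) := by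
  rw [Measure.setIntegral_comp_smul_of_pos _ _ _ hc, finrank_euclideanSpace_fin, smul_cube hc,
    smul_inv_smul₀ (pow_ne_zero _ hc.ne')]

theorem rpow_mul_rpow_neg_mul_pow_mul_rpow {N : ℝ} (hN : 0 < N) (s : ℝ) (d : ℕ) :
    N ^ (2 * s) * (2 * Real.pi) ^ (-(d : ℝ)) * ((Real.pi / N) ^ d * (Real.pi / N) ^ (2 * s))
      = Real.pi ^ (2 * s) * (2 * N) ^ (-(d : ℝ)) := by
  have hπ := Real.pi_pos
  have hpow : N ^ (2 * s) * (Real.pi / N) ^ (2 * s) = Real.pi ^ (2 * s) := by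
    rw [← Real.mul_rpow hN.le (by positivity), mul_div_cancel₀ _ hN.ne']
  have hneg : (2 * Real.pi) ^ (-(d : ℝ)) * (Real.pi / N) ^ d = (2 * N) ^ (-(d : ℝ)) := by
    rw [Real.rpow_neg (by positivity), Real.rpow_neg (by positivity), Real.rpow_natCast,
      Real.rpow_natCast, mul_pow, mul_pow, div_pow]
    field_simp
  rw [← hpow, ← hneg]
  ring

theorem sinc_kernel_dft_general (d N : ℕ) (hN : 1 ≤ N) (s : ℝ)
    (hs : s ∈ Set.Ioo (0 : ℝ) 1)
    (k : Fin d → ℤ) :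
    (∑ j ∈ Fintype.piFinset (fun _ : Fin d => Finset.Icc (-(N : ℤ)) ((N : ℤ) - 1)),
        sincKernel d N s j *
          Complex.exp (-Complex.I *
            ((Real.pi * (∑ l, (k l : ℝ) * (j l : ℝ)) / N : ℝ) : ℂ)))
      = ((Real.pi ^ (2 * s) : ℝ) : ℂ) * (((2 * (N : ℝ)) ^ (-(d : ℝ)) : ℝ) : ℂ) *
          ∫ ω in {ω : EuclideanSpace ℝ (Fin d) | ∀ l, ω l ∈ Set.Icc (-(N : ℝ)) (N : ℝ)},
            ((‖ω‖ ^ (2 * s) : ℝ) : ℂ) *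
              ∏ l : Fin d, dirichletY N (Real.pi / N * (ω l - (k l : ℝ))) := by
  have hN₀ : (0 : ℝ) < N := by exact_mod_cast hN
  set c := Real.pi / N with hc_def
  have hc : 0 < c := div_pos Real.pi_pos hN₀
  have hcN : c * N = Real.pi := div_mul_cancel₀ _ hN₀.ne'
  have h2s : 0 ≤ 2 * s := by linarith [hs.1]
  have hw : IntegrableOn (fun ω : EuclideanSpace ℝ (Fin d) => ((‖ω‖ ^ (2 * s) : ℝ) : ℂ))
      (cube d Real.pi) :=
    (by fun_prop (disch := assumption) : Continuous _).continuousOn.integrableOn_compact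
      (isCompact_cube d _)
  have hphase : ∀ j : Fin d → ℤ, Real.pi * (∑ l, (k l : ℝ) * j l) / N
      = inner ℝ (c • intVec d k) (intVec d j) := fun j => by
    rw [real_inner_smul_left, inner_intVec, hc_def]
    simp [intVec, div_mul_eq_mul_div]
  have hscale : ∀ u : EuclideanSpace ℝ (Fin d),
      ((‖c • u‖ ^ (2 * s) : ℝ) : ℂ) * ∏ l, dirichletY N ((c • u) l - (c • intVec d k) l)
        = ((c ^ (2 * s) : ℝ) : ℂ) * (((‖u‖ ^ (2 * s) : ℝ) : ℂ) *
            ∏ l, dirichletY N (c * (u l - k l))) := fun u => by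
    simp [norm_smul, abs_of_pos hc, Real.mul_rpow hc.le (norm_nonneg u), intVec, mul_sub,
      mul_assoc]
  calc _ = (((N : ℝ) ^ (2 * s) * (2 * Real.pi) ^ (-(d : ℝ)) : ℝ) : ℂ) *
        ∑ j ∈ Fintype.piFinset (fun _ : Fin d => Finset.Icc (-(N : ℤ)) ((N : ℤ) - 1)),
          (∫ ω in cube d Real.pi, ((‖ω‖ ^ (2 * s) : ℝ) : ℂ) *
            Complex.exp (Complex.I * ((inner ℝ ω (intVec d j) : ℝ) : ℂ))) *
          Complex.exp (-Complex.I * ((inner ℝ (c • intVec d k) (intVec d j) : ℝ) : ℂ)) := by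
        simp_rw [hphase, mul_sum, sincKernel, ofReal_mul, mul_assoc]; rfl
    _ = (((N : ℝ) ^ (2 * s) * (2 * Real.pi) ^ (-(d : ℝ)) : ℝ) : ℂ) *
          ((c ^ d * c ^ (2 * s) : ℝ) : ℂ) *
        ∫ u in cube d N, ((‖u‖ ^ (2 * s) : ℝ) : ℂ) * ∏ l, dirichletY N (c * (u l - k l)) := by
        rw [sum_setIntegral_mul_exp_inner_mul_exp_neg_inner hw, ← hcN, setIntegral_cube_mul _ hc]
        simp_rw [hscale, integral_const_mul, ofReal_mul, Complex.real_smul, ofReal_pow]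
        ring
    _ = _ := by
        rw [← ofReal_mul, rpow_mul_rpow_neg_mul_pow_mul_rpow hN₀, ofReal_mul]; rfl

/-- The `(2N)^d`-point discrete Fourier transform of the sinc-fractional Laplacian kernel
has the single-integral representation
`Σ_j Φ(j) e^{−iπ⟨k,j⟩/N} = π^{2s}(2N)^{−d} ∫_{[−N,N]^d} ‖ω‖^{2s} Π_l Y((π/N)(ω_l − k_l)) dω`. -/
theorem sinc_kernel_dft (d N : ℕ) (hd : 1 ≤ d) (hN : 1 ≤ N) (s : ℝ)
    (hs : s ∈ Set.Ioo (0 : ℝ) 1)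
    (k : Fin d → ℤ) (hk : ∀ l, k l ∈ Finset.Icc (-(N : ℤ)) ((N : ℤ) - 1)) :
    (∑ j ∈ Fintype.piFinset (fun _ : Fin d => Finset.Icc (-(N : ℤ)) ((N : ℤ) - 1)),
        sincKernel d N s j *
          Complex.exp (-Complex.I *
            ((Real.pi * (∑ l, (k l : ℝ) * (j l : ℝ)) / N : ℝ) : ℂ)))
      = ((Real.pi ^ (2 * s) : ℝ) : ℂ) * (((2 * (N : ℝ)) ^ (-(d : ℝ)) : ℝ) : ℂ) *
          ∫ ω in {ω : EuclideanSpace ℝ (Fin d) | ∀ l, ω l ∈ Set.Icc (-(N : ℝ)) (N : ℝ)},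
            ((‖ω‖ ^ (2 * s) : ℝ) : ℂ) *
              ∏ l : Fin d, dirichletY N (Real.pi / N * (ω l - (k l : ℝ))) :=
  sinc_kernel_dft_general d N hN s hs k
end

section
/- Let d ≥ 1 and N ≥ 1 be integers, s ∈ (0,1), and K ∈ ℤ^d. Then, as the integer m → ∞, (2π)^{2s}·N^{−d}·(2m)^{−(d+2s)} · Σ_{j ∈ {−mN, …, mN−1}^d} ‖j‖^{2s} · e^{2πi⟨j, K⟩/(2mN)} converges to (2πN)^{−d} · ∫_{[−Nπ, Nπ]^d} ‖ω‖^{2s} · e^{i⟨ω, K⟩/N} dω. -/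
/-!
After the substitution `ω = (π / m) • j`, the sum is a Riemann sum with mesh `π / m` for the
continuous integrand `‖ω‖ ^ (2s) e^{i⟨ω, K⟩ / N}` over the box `[-Nπ, Nπ)^d`, one grid cell per
index `j ∈ {-mN, …, mN - 1}^d`: homogeneity of `‖·‖ ^ (2s)` turns the prefactor into
`(2πN)^{-d}` times the cell volume `(π / m)^d` times `(π / m)^{2s}`. A Riemann sum is the integral
of the step function obtained by rounding the argument down to the grid, and these step functions
converge pointwise to the integrand while staying bounded on the box, so dominated convergence
gives the limit.
-/

open MeasureTheory Filter Complex Set Topology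

variable {d : ℕ}

lemma setOf_forall_mem_eq_preimage_pi (A : Fin d → Set ℝ) :
    {x : EuclideanSpace ℝ (Fin d) | ∀ i, x i ∈ A i} = WithLp.ofLp ⁻¹' univ.pi A := by
  ext; simp

lemma measurableSet_setOf_forall_mem {A : Fin d → Set ℝ} (hA : ∀ i, MeasurableSet (A i)) :
    MeasurableSet {x : EuclideanSpace ℝ (Fin d) | ∀ i, x i ∈ A i} := by
  rw [setOf_forall_mem_eq_preimage_pi]
  exact (MeasurableSet.univ_pi hA).preimage (WithLp.measurable_ofLp 2 _)

lemma volume_setOf_forall_mem {A : Fin d → Set ℝ} (hA : ∀ i, MeasurableSet (A i)) :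
    volume {x : EuclideanSpace ℝ (Fin d) | ∀ i, x i ∈ A i} = ∏ i, volume (A i) := by
  rw [setOf_forall_mem_eq_preimage_pi, (PiLp.volume_preserving_ofLp _).measure_preimage
    (MeasurableSet.univ_pi hA).nullMeasurableSet, volume_pi_pi]

lemma setOf_forall_mem_Icc_ae_eq_Ico (a b : Fin d → ℝ) :
    {x : EuclideanSpace ℝ (Fin d) | ∀ i, x i ∈ Icc (a i) (b i)}
      =ᵐ[volume] {x | ∀ i, x i ∈ Ico (a i) (b i)} := by
  simp only [setOf_forall_mem_eq_preimage_pi]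
  exact (PiLp.volume_preserving_ofLp _).quasiMeasurePreserving.preimage_ae_eq
    Measure.pi_Ico_ae_eq_pi_Icc.symm

lemma EuclideanSpace.norm_le_sqrt_mul_of_forall_abs_le {x : EuclideanSpace ℝ (Fin d)} {a : ℝ}
    (ha : 0 ≤ a) (hx : ∀ i, |x i| ≤ a) : ‖x‖ ≤ √d * a := by
  rw [EuclideanSpace.norm_eq, ← Real.sqrt_sq ha, ← Real.sqrt_mul (Nat.cast_nonneg d)]
  gcongr
  calc ∑ i, ‖x i‖ ^ 2 ≤ ∑ _i : Fin d, a ^ 2 := by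
        gcongr with i; exact (Real.norm_eq_abs _).trans_le (hx i)
    _ = d * a ^ 2 := by simp

lemma floor_div_eq_iff {h : ℝ} (hh : 0 < h) {y : ℝ} {z : ℤ} :
    ⌊y / h⌋ = z ↔ y ∈ Ico (h * z) (h * (z + 1)) := by
  rw [Int.floor_eq_iff, le_div_iff₀ hh, div_lt_iff₀ hh, mem_Ico, mul_comm h, mul_comm h]

lemma abs_mul_floor_div_sub_le {h : ℝ} (hh : 0 < h) (y : ℝ) : |h * ⌊y / h⌋ - y| ≤ h := by
  have hy := (floor_div_eq_iff hh (y := y)).1 rfl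
  rw [abs_le]; constructor <;> nlinarith [hy.1, hy.2]

noncomputable def floorGrid (h : ℝ) (x : EuclideanSpace ℝ (Fin d)) : EuclideanSpace ℝ (Fin d) :=
  WithLp.toLp 2 fun i => h * ⌊x i / h⌋

def gridCell (h : ℝ) (j : Fin d → ℤ) : Set (EuclideanSpace ℝ (Fin d)) :=
  {x | ∀ i, x i ∈ Ico (h * j i) (h * (j i + 1))}

lemma mem_gridCell_iff {h : ℝ} (hh : 0 < h) {j : Fin d → ℤ} {x : EuclideanSpace ℝ (Fin d)} :
    x ∈ gridCell h j ↔ ∀ i, ⌊x i / h⌋ = j i := by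
  simp only [gridCell, mem_ofPred_eq, floor_div_eq_iff hh]

lemma pairwise_disjoint_gridCell {h : ℝ} (hh : 0 < h) :
    Pairwise (Function.onFun Disjoint (gridCell (d := d) h)) := by
  refine fun j j' hne => disjoint_left.2 fun x hx hx' => hne (funext fun i => ?_)
  rw [← (mem_gridCell_iff hh).1 hx i, (mem_gridCell_iff hh).1 hx' i]

lemma volume_gridCell (h : ℝ) (j : Fin d → ℤ) :
    volume (gridCell h j) = ENNReal.ofReal h ^ d := by
  rw [gridCell, volume_setOf_forall_mem fun _ => measurableSet_Ico]
  simp [Real.volume_Ico, ← mul_sub]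

lemma floorGrid_eq_of_mem_gridCell {h : ℝ} (hh : 0 < h) {j : Fin d → ℤ}
    {x : EuclideanSpace ℝ (Fin d)} (hx : x ∈ gridCell h j) : floorGrid h x = h • intVec d j := by
  ext i
  simp [floorGrid, intVec, (mem_gridCell_iff hh).1 hx i]

lemma floor_div_mem_Icc_iff {h : ℝ} (hh : 0 < h) (y : ℝ) (M : ℤ) :
    ⌊y / h⌋ ∈ Finset.Icc (-M) (M - 1) ↔ y ∈ Ico (-(h * M)) (h * M) := by
  rw [Finset.mem_Icc, Int.le_floor, Int.le_sub_one_iff, Int.floor_lt, le_div_iff₀ hh,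
    div_lt_iff₀ hh, mem_Ico]
  push_cast
  rw [mul_comm h, neg_mul]

lemma setOf_forall_mem_Ico_eq_biUnion_gridCell {h : ℝ} (hh : 0 < h) (M : ℤ) :
    {x : EuclideanSpace ℝ (Fin d) | ∀ i, x i ∈ Ico (-(h * M)) (h * M)}
      = ⋃ j ∈ Fintype.piFinset fun _ => Finset.Icc (-M) (M - 1), gridCell h j := by
  ext x
  simp only [mem_iUnion, mem_gridCell_iff hh, exists_prop, Fintype.mem_piFinset,
    mem_ofPred_eq, ← floor_div_mem_Icc_iff hh]
  exact ⟨fun hx => ⟨_, hx, fun _ => rfl⟩, fun ⟨j, hj, hx⟩ i => hx i ▸ hj i⟩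

lemma dist_floorGrid_le {h : ℝ} (hh : 0 < h) (x : EuclideanSpace ℝ (Fin d)) :
    dist (floorGrid h x) x ≤ √d * h := by
  rw [dist_eq_norm]
  exact EuclideanSpace.norm_le_sqrt_mul_of_forall_abs_le hh.le fun i =>
    abs_mul_floor_div_sub_le hh (x i)

lemma tendsto_floorGrid (x : EuclideanSpace ℝ (Fin d)) :
    Tendsto (fun h => floorGrid h x) (𝓝[>] 0) (𝓝 x) := by
  rw [tendsto_iff_dist_tendsto_zero]
  refine squeeze_zero' (Eventually.of_forall fun _ => dist_nonneg)
    (eventually_nhdsWithin_of_forall fun h hh => dist_floorGrid_le hh x) ?_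
  simpa using ((continuous_const_mul √d).tendsto 0).mono_left nhdsWithin_le_nhds

lemma measurable_floorGrid (h : ℝ) : Measurable (floorGrid (d := d) h) := by
  unfold floorGrid; fun_prop

variable {E : Type*} [NormedAddCommGroup E] [NormedSpace ℝ E]

lemma setIntegral_comp_floorGrid [CompleteSpace E] (f : EuclideanSpace ℝ (Fin d) → E) {h : ℝ}
    (hh : 0 < h) (M : ℤ) :
    ∫ x in {x : EuclideanSpace ℝ (Fin d) | ∀ i, x i ∈ Ico (-(h * M)) (h * M)}, f (floorGrid h x)
      = h ^ d • ∑ j ∈ Fintype.piFinset fun _ => Finset.Icc (-M) (M - 1), f (h • intVec d j) := by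
  have hcell : ∀ j, MeasurableSet (gridCell (d := d) h j) := fun j =>
    measurableSet_setOf_forall_mem fun _ => measurableSet_Ico
  have hconst : ∀ j, ∀ x ∈ gridCell h j, f (floorGrid h x) = f (h • intVec d j) :=
    fun j x hx => congrArg f (floorGrid_eq_of_mem_gridCell hh hx)
  rw [setOf_forall_mem_Ico_eq_biUnion_gridCell hh, integral_biUnion_finset _ (fun j _ => hcell j)
    ((pairwise_disjoint_gridCell hh).set_pairwise _), Finset.smul_sum]
  · refine Finset.sum_congr rfl fun j _ => ?_
    rw [setIntegral_congr_fun (hcell j) (hconst j), setIntegral_const, measureReal_def,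
      volume_gridCell, ENNReal.toReal_pow, ENNReal.toReal_ofReal hh.le]
  · refine fun j _ =>
      (integrableOn_const ?_).congr_fun (fun x hx => (hconst j x hx).symm) (hcell j)
    simp [volume_gridCell]

theorem tendsto_setIntegral_comp_floorGrid {f : EuclideanSpace ℝ (Fin d) → E} (hf : Continuous f)
    {B : Set (EuclideanSpace ℝ (Fin d))} (hB : Bornology.IsBounded B) (hBm : MeasurableSet B) :
    Tendsto (fun h => ∫ x in B, f (floorGrid h x)) (𝓝[>] 0) (𝓝 (∫ x in B, f x)) := by
  obtain ⟨R, hR⟩ := hB.subset_closedBall 0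
  obtain ⟨C, hC⟩ := (isCompact_closedBall (0 : EuclideanSpace ℝ (Fin d)) (R + √d))
    |>.exists_bound_of_continuousOn hf.continuousOn
  refine tendsto_integral_filter_of_dominated_convergence (fun _ => C)
    (Eventually.of_forall fun h =>
      hf.comp_aestronglyMeasurable (measurable_floorGrid h).aestronglyMeasurable)
    ?_ (integrableOn_const hB.measure_lt_top.ne)
    (ae_of_all _ fun x => (hf.tendsto x).comp (tendsto_floorGrid x))
  filter_upwards [Ioc_mem_nhdsGT one_pos] with h ⟨hh, hh1⟩
  filter_upwards [ae_restrict_mem hBm] with x hx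
  refine hC _ (Metric.mem_closedBall.2 ?_)
  calc dist (floorGrid h x) 0 ≤ dist (floorGrid h x) x + dist x 0 := dist_triangle _ _ _
    _ ≤ √d * h + R := add_le_add (dist_floorGrid_le hh x) (hR hx)
    _ ≤ R + √d := by nlinarith [Real.sqrt_nonneg d]

theorem tendsto_riemannSum_setIntegral_Icc [CompleteSpace E] {f : EuclideanSpace ℝ (Fin d) → E}
    (hf : Continuous f) {L : ℝ} (hL : 0 < L) :
    Tendsto (fun M : ℕ => (L / M) ^ d •
        ∑ j ∈ Fintype.piFinset fun _ => Finset.Icc (-(M : ℤ)) (M - 1), f ((L / M) • intVec d j))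
      atTop (𝓝 (∫ x in {x : EuclideanSpace ℝ (Fin d) | ∀ i, x i ∈ Icc (-L) L}, f x)) := by
  have hmesh : Tendsto (fun M : ℕ => L / M) atTop (𝓝[>] 0) :=
    tendsto_nhdsWithin_of_tendsto_nhds_of_eventually_within _
      (tendsto_const_div_atTop_nhds_zero_nat L)
      ((eventually_gt_atTop 0).mono fun _ hM => div_pos hL (Nat.cast_pos.2 hM))
  have hbox : Bornology.IsBounded {x : EuclideanSpace ℝ (Fin d) | ∀ i, x i ∈ Ico (-L) L} :=
    (Metric.isBounded_closedBall (x := 0) (r := √d * L)).subset fun x hx =>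
      mem_closedBall_zero_iff.2 <| EuclideanSpace.norm_le_sqrt_mul_of_forall_abs_le hL.le
        fun i => abs_le.2 ⟨(hx i).1, (hx i).2.le⟩
  rw [setIntegral_congr_set (setOf_forall_mem_Icc_ae_eq_Ico _ _)]
  refine ((tendsto_setIntegral_comp_floorGrid hf hbox
    (measurableSet_setOf_forall_mem fun _ => measurableSet_Ico)).comp hmesh).congr' ?_
  filter_upwards [eventually_ge_atTop 1] with M hM
  have hM0 : (0 : ℝ) < M := by exact_mod_cast hM
  have hLM : L / M * ((M : ℤ) : ℝ) = L := by push_cast; field_simp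
  simp only [Function.comp_apply]
  rw [← setIntegral_comp_floorGrid f (div_pos hL hM0), hLM]

lemma kernel_prefactor_eq {m N : ℝ} (hm : 0 < m) (hN : 0 < N) (d : ℕ) (s : ℝ) :
    (2 * Real.pi) ^ (2 * s) * N ^ (-(d : ℝ)) * (2 * m) ^ (-((d : ℝ) + 2 * s))
      = (2 * Real.pi * N) ^ (-(d : ℝ)) * (Real.pi / m) ^ d * (Real.pi / m) ^ (2 * s) := by
  have hpi := Real.pi_pos
  rw [← Real.rpow_natCast, Real.rpow_neg (by positivity), Real.rpow_neg (by positivity),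
    Real.rpow_neg (by positivity), Real.rpow_add (by positivity),
    Real.mul_rpow (by positivity) (by positivity), Real.mul_rpow (by positivity) hm.le,
    Real.mul_rpow (by positivity) hN.le, Real.mul_rpow (by positivity) hpi.le,
    Real.div_rpow hpi.le hm.le, Real.div_rpow hpi.le hm.le, Real.mul_rpow (by positivity) hm.le]
  field_simp

theorem periodic_kernel_tendsto_sinc_kernel_general (d N : ℕ) (hN : 1 ≤ N) (s : ℝ)
    (hs : s ∈ Set.Ioo (0 : ℝ) 1) (K : Fin d → ℤ) :
    Tendsto
      (fun m : ℕ =>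
        (((2 * Real.pi) ^ (2 * s) : ℝ) : ℂ) * (((N : ℝ) ^ (-(d : ℝ)) : ℝ) : ℂ) *
          (((2 * (m : ℝ)) ^ (-((d : ℝ) + 2 * s)) : ℝ) : ℂ) *
          ∑ j ∈ Fintype.piFinset
              (fun _ : Fin d => Finset.Icc (-((m : ℤ) * N)) ((m : ℤ) * N - 1)),
            ((‖intVec d j‖ ^ (2 * s) : ℝ) : ℂ) *
              Complex.exp (2 * Real.pi * Complex.I *
                (((inner ℝ (intVec d j) (intVec d K) : ℝ) / (2 * m * N) : ℝ) : ℂ)))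
      atTop
      (nhds
        ((((2 * Real.pi * N) ^ (-(d : ℝ)) : ℝ) : ℂ) *
          ∫ ω in {ω : EuclideanSpace ℝ (Fin d) |
              ∀ l, ω l ∈ Set.Icc (-((N : ℝ) * Real.pi)) ((N : ℝ) * Real.pi)},
            ((‖ω‖ ^ (2 * s) : ℝ) : ℂ) *
              Complex.exp (Complex.I *
                (((inner ℝ ω (intVec d K) : ℝ) / N : ℝ) : ℂ)))) := by
  set f : EuclideanSpace ℝ (Fin d) → ℂ := fun ω => ((‖ω‖ ^ (2 * s) : ℝ) : ℂ) *
    Complex.exp (Complex.I * (((inner ℝ ω (intVec d K) : ℝ) / N : ℝ) : ℂ))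
  have hf : Continuous f := by
    have := Real.continuous_rpow_const (q := 2 * s) (by linarith [hs.1])
    fun_prop
  have hN0 : (0 : ℝ) < N := by exact_mod_cast hN
  have hmN : Tendsto (fun m : ℕ => m * N) atTop atTop :=
    tendsto_id.atTop_mul_const' hN
  refine (((tendsto_riemannSum_setIntegral_Icc hf (by positivity)).comp hmN).const_mul
    (((2 * Real.pi * N) ^ (-(d : ℝ)) : ℝ) : ℂ)).congr' ?_
  filter_upwards [eventually_ge_atTop 1] with m hm
  have hm0 : (0 : ℝ) < m := by exact_mod_cast hm
  have hmesh : (N : ℝ) * Real.pi / ((m * N : ℕ) : ℝ) = Real.pi / m := by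
    push_cast; field_simp
  have hsummand : ∀ j, f ((Real.pi / m) • intVec d j) = (((Real.pi / m) ^ (2 * s) : ℝ) : ℂ) *
      (((‖intVec d j‖ ^ (2 * s) : ℝ) : ℂ) * Complex.exp (2 * Real.pi * Complex.I *
        (((inner ℝ (intVec d j) (intVec d K) : ℝ) / (2 * m * N) : ℝ) : ℂ))) := by
    intro j
    simp only [f]
    rw [norm_smul, real_inner_smul_left, Real.norm_of_nonneg (by positivity),
      Real.mul_rpow (by positivity) (norm_nonneg _), Complex.ofReal_mul, mul_assoc]
    congr 3
    push_cast
    field_simp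
  simp only [Function.comp_apply, hmesh, hsummand, ← Finset.mul_sum]
  rw [Complex.real_smul, ← mul_assoc, ← mul_assoc, Nat.cast_mul]
  congr 1
  exact_mod_cast (kernel_prefactor_eq hm0 hN0 d s).symm

/-- As `m → ∞`, the convolution kernel of the discrete scaled periodic fractional
Laplacian of order `s` with scale factor `S = 2m` on a grid of mesh `1/N` converges to
the convolution kernel `Φ^N(K)` of the sinc-fractional Laplacian:
`(2π)^{2s} N^{−d} (2m)^{−(d+2s)} Σ_{j∈{−mN,…,mN−1}^d} ‖j‖^{2s} e^{2πi⟨j,K⟩/(2mN)}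
  → (2πN)^{−d} ∫_{[−Nπ,Nπ]^d} ‖ω‖^{2s} e^{i⟨ω,K⟩/N} dω`. -/
theorem periodic_kernel_tendsto_sinc_kernel (d N : ℕ) (hd : 1 ≤ d) (hN : 1 ≤ N) (s : ℝ)
    (hs : s ∈ Set.Ioo (0 : ℝ) 1) (K : Fin d → ℤ) :
    Tendsto
      (fun m : ℕ =>
        (((2 * Real.pi) ^ (2 * s) : ℝ) : ℂ) * (((N : ℝ) ^ (-(d : ℝ)) : ℝ) : ℂ) *
          (((2 * (m : ℝ)) ^ (-((d : ℝ) + 2 * s)) : ℝ) : ℂ) *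
          ∑ j ∈ Fintype.piFinset
              (fun _ : Fin d => Finset.Icc (-((m : ℤ) * N)) ((m : ℤ) * N - 1)),
            ((‖intVec d j‖ ^ (2 * s) : ℝ) : ℂ) *
              Complex.exp (2 * Real.pi * Complex.I *
                (((inner ℝ (intVec d j) (intVec d K) : ℝ) / (2 * m * N) : ℝ) : ℂ)))
      atTop
      (nhds
        ((((2 * Real.pi * N) ^ (-(d : ℝ)) : ℝ) : ℂ) *
          ∫ ω in {ω : EuclideanSpace ℝ (Fin d) |
              ∀ l, ω l ∈ Set.Icc (-((N : ℝ) * Real.pi)) ((N : ℝ) * Real.pi)},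
            ((‖ω‖ ^ (2 * s) : ℝ) : ℂ) *
              Complex.exp (Complex.I *
                (((inner ℝ ω (intVec d K) : ℝ) / N : ℝ) : ℂ)))) :=
  periodic_kernel_tendsto_sinc_kernel_general d N hN s hs K
end

section
/- Let d ≥ 1 and N ≥ 1 be integers and s ∈ (0,1). Let (u_k)_{k ∈ {0,…,N−1}^d} be any family of real numbers. Then for every κ ∈ {0,…,N−1}^d, as the integer m → ∞ (with S = 2m), S^{−2s} · (2π)^{2s}·(SN)^{−d} · Σ_{k ∈ {0,…,N−1}^d} u_k · Σ_{j ∈ {−SN/2, …, SN/2 − 1}^d} ‖j‖^{2s} · e^{2πi⟨j, κ − k⟩/(SN)} converges to Σ_{k ∈ {0,…,N−1}^d} u_k · (2πN)^{−d} · ∫_{[−Nπ, Nπ]^d} ‖ω‖^{2s} · e^{i⟨ω, κ − k⟩/N} dω. -/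
/-!
Substituting `ω = (π / m) j` turns the inner `j`-sum, prefactors included, into exactly
`(2πN)^{-d}` times the Riemann sum of `ω ↦ ‖ω‖^{2s} e^{i⟨ω, κ - k⟩/N}` over the grid `(π/m) ℤ^d`
in the cube `[-Nπ, Nπ)^d`, with cell volume `(π/m)^d`. Riemann sums of a continuous function on a
cube converge to its integral: the Riemann sum is the integral of `f` composed with rounding each
coordinate down to the mesh, and dominated convergence applies since the rounded point tends to `ω`
and stays in the compact cube.
-/

open MeasureTheory Filter Complex

open Set Topology Real

section CoordBox

variable {d : ℕ}

def coordBox (t : Fin d → Set ℝ) : Set (EuclideanSpace ℝ (Fin d)) := {ω | ∀ i, ω i ∈ t i}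

lemma coordBox_eq_preimage (t : Fin d → Set ℝ) :
    coordBox t = WithLp.ofLp ⁻¹' univ.pi t := by
  ext ω; simp [coordBox]

lemma measurableSet_coordBox {t : Fin d → Set ℝ} (ht : ∀ i, MeasurableSet (t i)) :
    MeasurableSet (coordBox t) := by
  rw [coordBox_eq_preimage]
  exact (PiLp.volume_preserving_ofLp (Fin d)).measurable (.univ_pi ht)

lemma volume_coordBox {t : Fin d → Set ℝ} (ht : ∀ i, MeasurableSet (t i)) :
    volume (coordBox t) = ∏ i, volume (t i) := by
  rw [coordBox_eq_preimage, (PiLp.volume_preserving_ofLp (Fin d)).measure_preimage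
    (MeasurableSet.univ_pi ht).nullMeasurableSet, volume_pi_pi]

lemma isCompact_coordBox {t : Fin d → Set ℝ} (ht : ∀ i, IsCompact (t i)) :
    IsCompact (coordBox t) := by
  rw [coordBox_eq_preimage]
  exact (PiLp.homeomorph 2 _).isCompact_preimage.mpr (isCompact_univ_pi ht)

lemma coordBox_Ico_ae_eq_Icc (a b : Fin d → ℝ) :
    coordBox (fun i => Ico (a i) (b i)) =ᵐ[volume] coordBox (fun i => Icc (a i) (b i)) := by
  simp only [coordBox_eq_preimage]
  exact (PiLp.volume_preserving_ofLp (Fin d)).quasiMeasurePreserving.preimage_ae_eq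
    (Measure.pi_Ico_ae_eq_pi_Icc)

end CoordBox

section Grid

variable {d : ℕ}

noncomputable def gridIndex (h : ℝ) (ω : EuclideanSpace ℝ (Fin d)) : Fin d → ℤ :=
  fun i => ⌊ω i / h⌋

noncomputable def gridPoint (h : ℝ) (ω : EuclideanSpace ℝ (Fin d)) : EuclideanSpace ℝ (Fin d) :=
  h • intVec d (gridIndex h ω)

variable {h : ℝ}

lemma floor_div_mem_Ico_iff (hh : 0 < h) (x : ℝ) (a b : ℤ) :
    ⌊x / h⌋ ∈ Ico a b ↔ x ∈ Ico (h * a) (h * b) := by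
  simp only [mem_Ico, Int.le_floor, Int.floor_lt, le_div_iff₀ hh, div_lt_iff₀ hh, mul_comm h]

lemma gridIndex_preimage_singleton (hh : 0 < h) (j : Fin d → ℤ) :
    gridIndex h ⁻¹' {j} = coordBox fun i => Ico (h * j i) (h * (j i + 1)) := by
  ext ω
  simp only [mem_preimage, mem_singleton_iff, funext_iff, coordBox, mem_ofPred_eq]
  refine forall_congr' fun i => ?_
  rw [← Int.cast_one, ← Int.cast_add, ← floor_div_mem_Ico_iff hh, mem_Ico, gridIndex]
  omega

lemma gridIndex_preimage_cube (hh : 0 < h) (n : ℕ) :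
    gridIndex (d := d) h ⁻¹'
        ↑(Fintype.piFinset fun _ : Fin d => Finset.Icc (-(n : ℤ)) (n - 1)) =
      coordBox fun _ => Ico (-(n * h)) (n * h) := by
  ext ω
  simp only [mem_preimage, Finset.mem_coe, Fintype.mem_piFinset, Finset.mem_Icc, coordBox,
    mem_ofPred_eq]
  refine forall_congr' fun i => ?_
  have := floor_div_mem_Ico_iff hh (ω i) (-n) n
  push_cast at this
  rw [show -((n : ℝ) * h) = h * -n by ring, mul_comm (n : ℝ) h, ← this, mem_Ico, gridIndex]
  omega

lemma measurable_gridIndex : Measurable (gridIndex (d := d) h) :=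
  measurable_pi_lambda _ fun i =>
    ((measurable_pi_apply i).comp (PiLp.volume_preserving_ofLp (Fin d)).measurable).div_const _
      |>.floor

lemma volume_gridIndex_preimage_singleton (hh : 0 < h) (j : Fin d → ℤ) :
    volume (gridIndex h ⁻¹' {j}) = ENNReal.ofReal (h ^ d) := by
  rw [gridIndex_preimage_singleton hh, volume_coordBox fun _ => measurableSet_Ico]
  simp [Real.volume_Ico, mul_add, ENNReal.ofReal_pow hh.le]

lemma tendsto_mul_floor_div (x : ℝ) : Tendsto (fun h => h * ⌊x / h⌋) (𝓝[>] 0) (𝓝 x) := by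
  have hlower : Tendsto (fun h => x - h) (𝓝[>] 0) (𝓝 x) := by
    simpa using (tendsto_const_nhds.sub tendsto_id).mono_left (nhdsWithin_le_nhds (a := (0 : ℝ)))
  refine tendsto_of_tendsto_of_tendsto_of_le_of_le' hlower tendsto_const_nhds ?_ ?_
  · filter_upwards [self_mem_nhdsWithin] with h (hh : 0 < h)
    have := (div_lt_iff₀' hh).mp (Int.lt_floor_add_one (x / h))
    linarith [mul_add h (⌊x / h⌋ : ℝ) 1]
  · filter_upwards [self_mem_nhdsWithin] with h (hh : 0 < h)
    exact (le_div_iff₀' hh).mp (Int.floor_le _)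

lemma measurable_gridPoint : Measurable (gridPoint (d := d) h) :=
  (measurable_of_countable fun j => h • intVec d j).comp measurable_gridIndex

lemma tendsto_gridPoint_nhdsGT (ω : EuclideanSpace ℝ (Fin d)) :
    Tendsto (fun h => gridPoint h ω) (𝓝[>] 0) (𝓝 ω) :=
  ((PiLp.continuous_toLp 2 _).tendsto (WithLp.ofLp ω)).comp
    (tendsto_pi_nhds.mpr fun i => tendsto_mul_floor_div (ω i))

lemma gridPoint_mem_coordBox_Icc {n : ℕ} (hh : 0 < h) {ω : EuclideanSpace ℝ (Fin d)}
    (hω : ω ∈ coordBox fun _ => Ico (-(n * h)) (n * h)) :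
    gridPoint h ω ∈ coordBox fun _ => Icc (-(n * h)) (n * h) := by
  rw [← gridIndex_preimage_cube hh] at hω
  intro i
  obtain ⟨hlo, hhi⟩ := Finset.mem_Icc.mp (Fintype.mem_piFinset.mp hω i)
  have hlo' : -(n : ℝ) ≤ gridIndex h ω i := by exact_mod_cast hlo
  have hhi' : (gridIndex h ω i : ℝ) ≤ n := by
    exact_mod_cast hhi.trans (Int.sub_le_self _ one_pos.le)
  simp only [gridPoint, intVec, PiLp.smul_apply, smul_eq_mul]
  constructor <;> nlinarith

end Grid

section RiemannSum

variable {d : ℕ} {E : Type*} [NormedAddCommGroup E] [NormedSpace ℝ E]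

noncomputable def cubeRiemannSum (f : EuclideanSpace ℝ (Fin d) → E) (h : ℝ) (n : ℕ) : E :=
  ∑ j ∈ Fintype.piFinset (fun _ : Fin d => Finset.Icc (-(n : ℤ)) (n - 1)),
    h ^ d • f (h • intVec d j)

lemma setIntegral_comp_gridPoint [CompleteSpace E] (f : EuclideanSpace ℝ (Fin d) → E) {h : ℝ}
    (hh : 0 < h) (n : ℕ) :
    ∫ ω in coordBox (fun _ => Ico (-(n * h)) (n * h)), f (gridPoint h ω) =
      cubeRiemannSum f h n := by
  have hfiber (j : Fin d → ℤ) : MeasurableSet (gridIndex h ⁻¹' {j}) :=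
    measurable_gridIndex (measurableSet_singleton j)
  have hconst (j : Fin d → ℤ) : EqOn (fun ω => f (gridPoint h ω)) (fun _ => f (h • intVec d j))
      (gridIndex h ⁻¹' {j}) := fun ω (hω : gridIndex h ω = j) => by
    simp only [gridPoint, hω]
  rw [← gridIndex_preimage_cube hh, ← biUnion_preimage_singleton, Finset.set_biUnion_coe,
    integral_biUnion_finset _ (fun j _ => hfiber j) (pairwiseDisjoint_fiber _ _)]
  · refine Finset.sum_congr rfl fun j _ => ?_
    rw [setIntegral_congr_fun (hfiber j) (hconst j), setIntegral_const, measureReal_def,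
      volume_gridIndex_preimage_singleton hh, ENNReal.toReal_ofReal (by positivity)]
  · intro j _
    exact (integrableOn_congr_fun (hconst j) (hfiber j)).mpr <| integrableOn_const <| by
      rw [volume_gridIndex_preimage_singleton hh]; exact ENNReal.ofReal_ne_top

theorem tendsto_cubeRiemannSum [CompleteSpace E] {f : EuclideanSpace ℝ (Fin d) → E}
    (hf : Continuous f) {L : ℝ} (hL : 0 < L) :
    Tendsto (fun n : ℕ => cubeRiemannSum f (L / n) n) atTop
      (𝓝 (∫ ω in coordBox fun _ => Icc (-L) L, f ω)) := by
  obtain ⟨C, hC⟩ := (isCompact_coordBox fun _ => isCompact_Icc (a := -L) (b := L))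
    |>.exists_bound_of_continuousOn hf.continuousOn
  have hmesh : Tendsto (fun n : ℕ => L / n) atTop (𝓝[>] 0) :=
    tendsto_nhdsWithin_iff.mpr ⟨tendsto_const_div_atTop_nhds_zero_nat L,
      (eventually_gt_atTop 0).mono fun n hn => div_pos hL (Nat.cast_pos.mpr hn)⟩
  have hcube : ∀ᶠ n : ℕ in atTop, 0 < L / n ∧ (n : ℝ) * (L / n) = L :=
    (eventually_gt_atTop 0).mono fun n hn =>
      ⟨div_pos hL (Nat.cast_pos.mpr hn), mul_div_cancel₀ L (Nat.cast_ne_zero.mpr hn.ne')⟩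
  have hlim : Tendsto (fun n : ℕ => ∫ ω in coordBox fun _ => Ico (-L) L, f (gridPoint (L / n) ω))
      atTop (𝓝 (∫ ω in coordBox fun _ => Ico (-L) L, f ω)) := by
    refine tendsto_integral_filter_of_dominated_convergence (fun _ => C)
      (.of_forall fun _ => hf.comp_aestronglyMeasurable measurable_gridPoint.aestronglyMeasurable)
      ?_ (integrableOn_const ?_)
      (ae_of_all _ fun ω => (hf.tendsto ω).comp ((tendsto_gridPoint_nhdsGT ω).comp hmesh))
    · filter_upwards [hcube] with n ⟨hpos, hn⟩
      rw [ae_restrict_iff' (measurableSet_coordBox fun _ => measurableSet_Ico)]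
      refine ae_of_all _ fun ω hω => hC _ ?_
      simpa only [hn] using gridPoint_mem_coordBox_Icc (n := n) hpos (by rwa [hn])
    · simp [volume_coordBox fun _ => measurableSet_Ico]
  rw [← setIntegral_congr_set (coordBox_Ico_ae_eq_Icc _ _)]
  refine hlim.congr' ?_
  filter_upwards [hcube] with n ⟨hpos, hn⟩
  rw [← setIntegral_comp_gridPoint f hpos n, hn]

end RiemannSum

lemma scaledPeriodic_prefactor_eq {m N : ℝ} (hm : 0 < m) (hN : 0 < N) (s : ℝ) (d : ℕ) :
    (2 * m) ^ (-(2 * s)) * ((2 * π) ^ (2 * s) * (2 * m * N) ^ (-(d : ℝ))) =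
      (2 * π * N) ^ (-(d : ℝ)) * ((π / m) ^ d * (π / m) ^ (2 * s)) := by
  have hs : (2 * m) ^ (-(2 * s)) * (2 * π) ^ (2 * s) = (π / m) ^ (2 * s) := by
    rw [rpow_neg (by positivity), ← inv_rpow (by positivity),
      ← mul_rpow (by positivity) (by positivity)]
    congr 1
    field_simp
  have hd : (2 * m * N) ^ (-(d : ℝ)) = (2 * π * N) ^ (-(d : ℝ)) * (π / m) ^ d := by
    rw [rpow_neg (by positivity), rpow_natCast, rpow_neg (by positivity), rpow_natCast,
      ← inv_pow, ← inv_pow, ← mul_pow]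
    congr 1
    field_simp
  rw [hd, ← hs]
  ring

section SincKernel

variable {d : ℕ}

noncomputable def sincIntegrand (s N : ℝ) (K ω : EuclideanSpace ℝ (Fin d)) : ℂ :=
  ((‖ω‖ ^ (2 * s) : ℝ) : ℂ) * Complex.exp (Complex.I * ((inner ℝ ω K / N : ℝ) : ℂ))

lemma continuous_sincIntegrand {s : ℝ} (hs : 0 ≤ s) (N : ℝ) (K : EuclideanSpace ℝ (Fin d)) :
    Continuous (sincIntegrand s N K) := by
  unfold sincIntegrand
  fun_prop (disch := positivity)

lemma scaledPeriodic_term_eq_smul_sincIntegrand {m N : ℝ} (hm : 0 < m) (hN : 0 < N) (s : ℝ)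
    (j K : EuclideanSpace ℝ (Fin d)) :
    (((2 * m) ^ (-(2 * s)) : ℝ) : ℂ) * ((((2 * π) ^ (2 * s) : ℝ) : ℂ) *
        (((2 * m * N) ^ (-(d : ℝ)) : ℝ) : ℂ)) *
      (((‖j‖ ^ (2 * s) : ℝ) : ℂ) *
        Complex.exp (2 * π * Complex.I * ((inner ℝ j K / (2 * m * N) : ℝ) : ℂ))) =
      (((2 * π * N) ^ (-(d : ℝ)) : ℝ) : ℂ) * ((π / m) ^ d • sincIntegrand s N K ((π / m) • j)) := by
  have hphase : 2 * π * Complex.I * ((inner ℝ j K / (2 * m * N) : ℝ) : ℂ) =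
      Complex.I * ((inner ℝ ((π / m) • j) K / N : ℝ) : ℂ) := by
    rw [real_inner_smul_left]
    push_cast
    field_simp
  have hnorm : ‖(π / m) • j‖ ^ (2 * s) = (π / m) ^ (2 * s) * ‖j‖ ^ (2 * s) := by
    rw [norm_smul, Real.norm_of_nonneg (by positivity),
      mul_rpow (by positivity) (norm_nonneg _)]
  have hfactor := congrArg (fun x : ℝ => (x : ℂ)) (scaledPeriodic_prefactor_eq hm hN s d)
  rw [sincIntegrand, hnorm, ← hphase, Complex.real_smul]
  push_cast at hfactor ⊢
  linear_combination (((‖j‖ ^ (2 * s) : ℝ) : ℂ) *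
    Complex.exp (2 * π * Complex.I * ((inner ℝ j K : ℂ) / (2 * m * N)))) * hfactor

lemma scaledPeriodicSum_eq_cubeRiemannSum {m N : ℕ} (hm : 0 < m) (hN : 0 < N) (s : ℝ)
    (K : EuclideanSpace ℝ (Fin d)) :
    (((2 * (m : ℝ)) ^ (-(2 * s)) : ℝ) : ℂ) * ((((2 * π) ^ (2 * s) : ℝ) : ℂ) *
        (((2 * (m : ℝ) * N) ^ (-(d : ℝ)) : ℝ) : ℂ)) *
      ∑ j ∈ Fintype.piFinset (fun _ : Fin d => Finset.Icc (-((m : ℤ) * N)) ((m : ℤ) * N - 1)),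
        ((‖intVec d j‖ ^ (2 * s) : ℝ) : ℂ) *
          Complex.exp (2 * π * Complex.I * ((inner ℝ (intVec d j) K / (2 * m * N) : ℝ) : ℂ)) =
      (((2 * π * N) ^ (-(d : ℝ)) : ℝ) : ℂ) *
        cubeRiemannSum (sincIntegrand s N K) (N * π / (m * N : ℕ)) (m * N) := by
  have hmesh : (N : ℝ) * π / (m * N : ℕ) = π / m := by
    push_cast
    field_simp
  rw [hmesh, cubeRiemannSum, Finset.mul_sum, Finset.mul_sum, Nat.cast_mul]
  exact Finset.sum_congr rfl fun j _ =>
    scaledPeriodic_term_eq_smul_sincIntegrand (Nat.cast_pos.mpr hm) (Nat.cast_pos.mpr hN) s _ K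

end SincKernel

theorem scaled_periodic_tendsto_sinc_general (d N : ℕ) (hN : 1 ≤ N) (s : ℝ)
    (hs : s ∈ Set.Ioo (0 : ℝ) 1)
    (u : (Fin d → ℕ) → ℝ) (κ : Fin d → ℕ) :
    Tendsto
      (fun m : ℕ =>
        (((2 * (m : ℝ)) ^ (-(2 * s)) : ℝ) : ℂ) *
          ((((2 * Real.pi) ^ (2 * s) : ℝ) : ℂ) *
            (((2 * (m : ℝ) * N) ^ (-(d : ℝ)) : ℝ) : ℂ)) *
          ∑ k ∈ Fintype.piFinset (fun _ : Fin d => Finset.range N),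
            (u k : ℂ) *
              ∑ j ∈ Fintype.piFinset
                  (fun _ : Fin d => Finset.Icc (-((m : ℤ) * N)) ((m : ℤ) * N - 1)),
                ((‖intVec d j‖ ^ (2 * s) : ℝ) : ℂ) *
                  Complex.exp (2 * Real.pi * Complex.I *
                    (((inner ℝ (intVec d j)
                          (intVec d (fun i => (κ i : ℤ) - (k i : ℤ))) : ℝ) /
                        (2 * m * N) : ℝ) : ℂ)))
      atTop
      (nhds
        (∑ k ∈ Fintype.piFinset (fun _ : Fin d => Finset.range N),
          (u k : ℂ) *
            ((((2 * Real.pi * N) ^ (-(d : ℝ)) : ℝ) : ℂ) *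
              ∫ ω in {ω : EuclideanSpace ℝ (Fin d) |
                  ∀ l, ω l ∈ Set.Icc (-((N : ℝ) * Real.pi)) ((N : ℝ) * Real.pi)},
                ((‖ω‖ ^ (2 * s) : ℝ) : ℂ) *
                  Complex.exp (Complex.I *
                    (((inner ℝ ω (intVec d (fun i => (κ i : ℤ) - (k i : ℤ))) : ℝ) /
                        N : ℝ) : ℂ))))) := by
  have hmN : Tendsto (fun m : ℕ => m * N) atTop atTop :=
    tendsto_atTop_mono (fun m => Nat.le_mul_of_pos_right m hN) tendsto_id
  have hRiemann (K : EuclideanSpace ℝ (Fin d)) :=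
    (tendsto_cubeRiemannSum (continuous_sincIntegrand hs.1.le N K)
      (mul_pos (Nat.cast_pos.mpr hN) pi_pos)).comp hmN
  refine (tendsto_finsetSum _ fun k _ => ((hRiemann _).const_mul
    (((2 * π * N) ^ (-(d : ℝ)) : ℝ) : ℂ)).const_mul (u k : ℂ)).congr' ?_
  filter_upwards [eventually_gt_atTop 0] with m hm
  rw [Finset.mul_sum]
  refine Finset.sum_congr rfl fun k _ => ?_
  rw [mul_left_comm _ (u k : ℂ), scaledPeriodicSum_eq_cubeRiemannSum hm hN s]
  rfl

/-- Equivalence of the scaled periodic fractional Laplacian (in the limit of infinite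
scale `S = 2m → ∞`) and the sinc-fractional Laplacian: for any grid data
`(u_k)_{k∈{0,…,N−1}^d}` and any grid point `κ`,
`S^{−2s}(2π)^{2s}(SN)^{−d} Σ_k u_k Σ_{j∈{−SN/2,…,SN/2−1}^d} ‖j‖^{2s} e^{2πi⟨j,κ−k⟩/(SN)}`
converges to `Σ_k u_k (2πN)^{−d} ∫_{[−Nπ,Nπ]^d} ‖ω‖^{2s} e^{i⟨ω,κ−k⟩/N} dω`. -/
theorem scaled_periodic_tendsto_sinc (d N : ℕ) (hd : 1 ≤ d) (hN : 1 ≤ N) (s : ℝ)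
    (hs : s ∈ Set.Ioo (0 : ℝ) 1)
    (u : (Fin d → ℕ) → ℝ) (κ : Fin d → ℕ) (hκ : ∀ i, κ i < N) :
    Tendsto
      (fun m : ℕ =>
        (((2 * (m : ℝ)) ^ (-(2 * s)) : ℝ) : ℂ) *
          ((((2 * Real.pi) ^ (2 * s) : ℝ) : ℂ) *
            (((2 * (m : ℝ) * N) ^ (-(d : ℝ)) : ℝ) : ℂ)) *
          ∑ k ∈ Fintype.piFinset (fun _ : Fin d => Finset.range N),
            (u k : ℂ) *
              ∑ j ∈ Fintype.piFinset
                  (fun _ : Fin d => Finset.Icc (-((m : ℤ) * N)) ((m : ℤ) * N - 1)),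
                ((‖intVec d j‖ ^ (2 * s) : ℝ) : ℂ) *
                  Complex.exp (2 * Real.pi * Complex.I *
                    (((inner ℝ (intVec d j)
                          (intVec d (fun i => (κ i : ℤ) - (k i : ℤ))) : ℝ) /
                        (2 * m * N) : ℝ) : ℂ)))
      atTop
      (nhds
        (∑ k ∈ Fintype.piFinset (fun _ : Fin d => Finset.range N),
          (u k : ℂ) *
            ((((2 * Real.pi * N) ^ (-(d : ℝ)) : ℝ) : ℂ) *
              ∫ ω in {ω : EuclideanSpace ℝ (Fin d) |
                  ∀ l, ω l ∈ Set.Icc (-((N : ℝ) * Real.pi)) ((N : ℝ) * Real.pi)},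
                ((‖ω‖ ^ (2 * s) : ℝ) : ℂ) *
                  Complex.exp (Complex.I *
                    (((inner ℝ ω (intVec d (fun i => (κ i : ℤ) - (k i : ℤ))) : ℝ) /
                        N : ℝ) : ℂ))))) :=
  scaled_periodic_tendsto_sinc_general d N hN s hs u κ
end
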